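/- arXiv:1202.2815 — 2 statements merged into one kernel-verified Lean document; each statement's English description precedes it below -/
import Mathlib

section
/- Let G(x) = x (the identity) and ν > 0. For the rescaled system dx/dη = (x - y)/ν, dy/dη = (ν/2)x(1 - x²), the origin-type singular point P₀ = (0,0) has Jacobian (1/ν)[[1, -1],[ν²/2, 0]]; its eigenvalues are complex (spiral) if and only if ν > 1/√2. Consequently, for the Hamer model with Burgers flux and g(u) = σu, the condition G'(0) < 2ν² (forcing a discontinuous profile) is equivalent to |u₊ - u₋| > √2·σ, given ν = -[u]/(2σ) = (u₋ - u₊)/(2σ). -/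
/-!
The Jacobian at `P₀` has trace `1/ν` and determinant `1/2`, so its characteristic polynomial
`X² - X/ν + 1/2` has non-real roots exactly when its discriminant `1/ν² - 2` is negative,
i.e. when `1 < 2ν²`, i.e. `ν > 1/√2`. Since `u₋ - u₊ = 2σν`, this reads `√2 σ < |u₊ - u₋|`.
-/

open Polynomial

theorem Complex.exists_im_ne_zero_sq_eq_ofReal_iff (d : ℝ) :
    (∃ w : ℂ, w.im ≠ 0 ∧ w ^ 2 = d) ↔ d < 0 := by
  constructor
  · rintro ⟨w, hw, hsq⟩
    have hre : w.re ^ 2 - w.im ^ 2 = d := by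
      simpa [sq] using congrArg Complex.re hsq
    have hw_re : w.re = 0 := by
      have him : w.re * w.im + w.im * w.re = 0 := by simpa [sq] using congrArg Complex.im hsq
      have : 2 * w.im * w.re = 0 := by linear_combination him
      simpa [hw] using this
    nlinarith [sq_pos_of_ne_zero hw]
  · intro hd
    refine ⟨Real.sqrt (-d) * Complex.I, by simpa using (Real.sqrt_pos.2 (neg_pos.2 hd)).ne', ?_⟩
    rw [mul_pow, Complex.I_sq, ← Complex.ofReal_pow, Real.sq_sqrt (neg_nonneg.2 hd.le)]
    push_cast
    ring

theorem Complex.exists_im_ne_zero_quadratic_eq_zero_iff (b c : ℝ) :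
    (∃ z : ℂ, z.im ≠ 0 ∧ z ^ 2 - b * z + c = 0) ↔ b ^ 2 < 4 * c := by
  have complete_square : ∀ z : ℂ,
      z ^ 2 - b * z + c = 0 ↔ (z - (b / 2 : ℝ)) ^ 2 = (b ^ 2 / 4 - c : ℝ) := by
    intro z
    push_cast
    constructor <;> intro h <;> linear_combination h
  have key := Complex.exists_im_ne_zero_sq_eq_ofReal_iff (b ^ 2 / 4 - c)
  constructor
  · rintro ⟨z, hz, hroot⟩
    have := key.1 ⟨z - (b / 2 : ℝ), by simpa using hz, (complete_square z).1 hroot⟩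
    linarith
  · intro h
    obtain ⟨w, hw, hsq⟩ := key.2 (by linarith)
    exact ⟨w + (b / 2 : ℝ), by simpa using hw, (complete_square _).2 (by simpa using hsq)⟩

theorem Matrix.exists_im_ne_zero_isRoot_charpoly_fin_two_iff
    (M : Matrix (Fin 2) (Fin 2) ℂ) {t d : ℝ} (ht : M.trace = t) (hd : M.det = d) :
    (∃ μ : ℂ, μ.im ≠ 0 ∧ M.charpoly.IsRoot μ) ↔ t ^ 2 < 4 * d := by
  simp only [Matrix.charpoly_fin_two, ht, hd, IsRoot.def, eval_add, eval_sub, eval_mul, eval_pow,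
    eval_X, eval_C]
  exact Complex.exists_im_ne_zero_quadratic_eq_zero_iff t d

theorem one_div_sqrt_two_lt_iff {ν : ℝ} (hν : 0 ≤ ν) : 1 / √2 < ν ↔ 1 < 2 * ν ^ 2 := by
  rw [one_div, ← Real.sqrt_inv, Real.sqrt_lt (by positivity) hν]
  constructor <;> intro h <;> linarith

/-- The Jacobian at `P₀ = (0, 0)` of the rescaled Hamer system with `G(x) = x`. -/
noncomputable def originJacobian (ν : ℝ) : Matrix (Fin 2) (Fin 2) ℂ :=
  (1 / ν : ℂ) • !![1, -1; (ν : ℂ) ^ 2 / 2, 0]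

theorem trace_originJacobian (ν : ℝ) : (originJacobian ν).trace = ((1 / ν : ℝ) : ℂ) := by
  simp [originJacobian, Matrix.trace_fin_two]

theorem det_originJacobian {ν : ℝ} (hν : ν ≠ 0) : (originJacobian ν).det = ((1 / 2 : ℝ) : ℂ) := by
  have : (ν : ℂ) ≠ 0 := by exact_mod_cast hν
  rw [originJacobian, Matrix.det_smul, Matrix.det_fin_two_of, Fintype.card_fin]
  push_cast
  field_simp
  ring

theorem stmt_18 (ν σ um up : ℝ) (hσ : 0 < σ) (hup : up < um)
    (hν : ν = (um - up) / (2 * σ))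
    (Mc : Matrix (Fin 2) (Fin 2) ℂ)
    (hMc : Mc = ((1 / ν : ℂ)) • !![1, -1; (ν : ℂ) ^ 2 / 2, 0]) :
    ((∃ μ : ℂ, μ.im ≠ 0 ∧ Mc.charpoly.IsRoot μ) ↔ 1 / Real.sqrt 2 < ν) ∧
    ((1 : ℝ) < 2 * ν ^ 2 ↔ Real.sqrt 2 * σ < |up - um|) := by
  have hν_pos : 0 < ν := hν ▸ div_pos (by linarith) (by linarith)
  have hMc_eq : Mc = originJacobian ν := hMc
  have hjump : |up - um| = 2 * σ * ν := by
    rw [abs_sub_comm, abs_of_pos (by linarith), hν]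
    field_simp
  rw [one_div_sqrt_two_lt_iff hν_pos.le, hjump, hMc_eq,
    Matrix.exists_im_ne_zero_isRoot_charpoly_fin_two_iff _ (trace_originJacobian ν)
      (det_originJacobian hν_pos.ne')]
  refine ⟨?_, ?_⟩
  · rw [div_pow, one_pow, div_lt_iff₀ (by positivity)]
    constructor <;> intro h <;> linarith
  · have hthreshold : 2 * σ * (1 / √2) = √2 * σ := by
      field_simp
      rw [Real.sq_sqrt zero_le_two]
    rw [← one_div_sqrt_two_lt_iff hν_pos.le, ← hthreshold, mul_lt_mul_iff_right₀ (by positivity)]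
end

section
/- Let σ > 0, u₊ < u₋ with c = (u₋+u₊)/2 ≠ 0 and g(u) = σu². For the Hamer/Burgers reduced system one has ν = -[u]/(4σc) and G(x) = x - ([u]/(4c))(1 - x²) where [u] = u₊ - u₋. Then: (i) G(±1) = ±1 and G'(0) = 1; (ii) the discontinuity condition G'(0) < 2ν² is equivalent to |u₊ - u₋| > 2√2·σ·|c|; (iii) G is non-monotone on [-1,1] if and only if |u₊ - u₋| > 2|c|. -/
/-!
With `k = [u] / (4c)` the profile is `G x = x - k (1 - x²)`, and the difference quotient
`(G y - G x) / (y - x) = 1 + k (x + y)` ranges over `(1 - 2|k|, 1 + 2|k|)` on `[-1, 1]`; so `G` is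
monotone there exactly when `|k| ≤ 1/2`. Otherwise the vertex `-1/(2k)` lies inside `(-1, 1)` and
`G` drops between it and one endpoint. The discontinuity condition is `(4σc)² < 2[u]²`, i.e.
`8σ²c² < [u]²`, after squaring.
-/

open Set

def quadraticG (k : ℝ) : ℝ → ℝ := fun x => x - k * (1 - x ^ 2)

namespace quadraticG

variable (k : ℝ)

@[simp] lemma apply_one : quadraticG k 1 = 1 := by simp [quadraticG]

@[simp] lemma apply_neg_one : quadraticG k (-1) = -1 := by simp [quadraticG]

lemma hasDerivAt (x : ℝ) : HasDerivAt (quadraticG k) (1 + 2 * k * x) x := by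
  refine ((hasDerivAt_id' x).sub (((hasDerivAt_pow 2 x).const_sub 1).const_mul k)).congr_deriv ?_
  push_cast
  ring

lemma sub_eq (x y : ℝ) : quadraticG k y - quadraticG k x = (y - x) * (1 + k * (x + y)) := by
  simp only [quadraticG]
  ring

lemma monotoneOn_of_abs_le (hk : |k| ≤ 1 / 2) : MonotoneOn (quadraticG k) (Icc (-1) 1) := by
  intro x ⟨hx₁, hx₂⟩ y ⟨hy₁, hy₂⟩ hxy
  have hsum : |x + y| ≤ 2 := abs_le.2 ⟨by linarith, by linarith⟩
  have hslope : 0 ≤ 1 + k * (x + y) := by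
    have : |k * (x + y)| ≤ 1 := by
      rw [abs_mul]
      nlinarith [abs_nonneg k, abs_nonneg (x + y)]
    linarith [neg_abs_le (k * (x + y))]
  have := sub_eq k x y
  nlinarith [mul_nonneg (sub_nonneg.2 hxy) hslope]

/-- Witnesses: the vertex `-1/(2k)` together with the endpoint on the far side of it. -/
lemma not_monotoneOn_of_lt_abs (hk : 1 / 2 < |k|) : ¬ MonotoneOn (quadraticG k) (Icc (-1) 1) := by
  intro hmono
  rcases lt_abs.1 hk with hk | hk
  · have hk0 : 0 < k := by linarith
    have hkne : k ≠ 0 := hk0.ne'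
    have hv₁ : -1 < -1 / (2 * k) := by rw [lt_div_iff₀ (by linarith)]; linarith
    have hv₂ : -1 / (2 * k) ≤ 1 := by rw [div_le_iff₀ (by linarith)]; linarith
    have hle := sub_nonneg.2 <| hmono ⟨le_rfl, by norm_num⟩ ⟨hv₁.le, hv₂⟩ hv₁.le
    rw [sub_eq, show 1 + k * (-1 + -1 / (2 * k)) = 1 / 2 - k by field_simp; ring] at hle
    nlinarith [sub_pos.2 hv₁]
  · have hk0 : k < 0 := by linarith
    have hkne : k ≠ 0 := hk0.ne
    have hv₁ : -1 ≤ -1 / (2 * k) := by rw [le_div_iff_of_neg (by linarith)]; linarith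
    have hv₂ : -1 / (2 * k) < 1 := by rw [div_lt_iff_of_neg (by linarith)]; linarith
    have hle := sub_nonneg.2 <| hmono ⟨hv₁, hv₂.le⟩ ⟨by norm_num, le_rfl⟩ hv₂.le
    rw [sub_eq, show 1 + k * (-1 / (2 * k) + 1) = 1 / 2 + k by field_simp; ring] at hle
    nlinarith [sub_pos.2 hv₂]

lemma monotoneOn_iff : MonotoneOn (quadraticG k) (Icc (-1) 1) ↔ |k| ≤ 1 / 2 :=
  ⟨fun h => not_lt.1 fun hk => not_monotoneOn_of_lt_abs k hk h, monotoneOn_of_abs_le k⟩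

end quadraticG

lemma one_lt_two_mul_div_sq_iff {x y : ℝ} (hy : y ≠ 0) :
    1 < 2 * (x / y) ^ 2 ↔ y ^ 2 < 2 * x ^ 2 := by
  rw [div_pow, ← mul_div_assoc, one_lt_div (by positivity)]

theorem stmt_19_general (σ um up c : ℝ) (hσ : 0 < σ) (hc0 : c ≠ 0)
    (du : ℝ) (hdu : du = up - um)
    (ν : ℝ) (hν : ν = -du / (4 * σ * c))
    (G : ℝ → ℝ) (hG : G = fun x => x - (du / (4 * c)) * (1 - x ^ 2)) :
    G 1 = 1 ∧ G (-1) = -1 ∧ HasDerivAt G 1 0 ∧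
    ((1 : ℝ) < 2 * ν ^ 2 ↔ 2 * Real.sqrt 2 * σ * |c| < |up - um|) ∧
    (¬ MonotoneOn G (Set.Icc (-1 : ℝ) 1) ↔ 2 * |c| < |up - um|) := by
  replace hG : G = quadraticG (du / (4 * c)) := hG
  subst hG hν
  rw [← hdu]
  refine ⟨quadraticG.apply_one _, quadraticG.apply_neg_one _, ?_, ?_, ?_⟩
  · simpa using quadraticG.hasDerivAt (du / (4 * c)) 0
  · have hlhs : 2 * Real.sqrt 2 * σ * |c| = |2 * Real.sqrt 2 * σ * c| := by
      rw [abs_mul, abs_of_pos (by positivity : 0 < 2 * Real.sqrt 2 * σ)]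
    have hsq : (2 * Real.sqrt 2 * σ * c) ^ 2 = 8 * σ ^ 2 * c ^ 2 := by
      rw [mul_pow, mul_pow, mul_pow, Real.sq_sqrt zero_le_two]
      ring
    rw [one_lt_two_mul_div_sq_iff (mul_ne_zero (by positivity) hc0), hlhs, ← sq_lt_sq, hsq]
    constructor <;> intro h <;> nlinarith
  · rw [quadraticG.monotoneOn_iff, not_le, abs_div, abs_mul, abs_of_pos (four_pos : (0 : ℝ) < 4),
      lt_div_iff₀ (by positivity)]
    constructor <;> intro h <;> linarith

theorem stmt_19 (σ um up c : ℝ) (hσ : 0 < σ) (hup : up < um)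
    (hc : c = (um + up) / 2) (hc0 : c ≠ 0)
    (du : ℝ) (hdu : du = up - um)
    (ν : ℝ) (hν : ν = -du / (4 * σ * c))
    (G : ℝ → ℝ) (hG : G = fun x => x - (du / (4 * c)) * (1 - x ^ 2)) :
    G 1 = 1 ∧ G (-1) = -1 ∧ HasDerivAt G 1 0 ∧
    ((1 : ℝ) < 2 * ν ^ 2 ↔ 2 * Real.sqrt 2 * σ * |c| < |up - um|) ∧
    (¬ MonotoneOn G (Set.Icc (-1 : ℝ) 1) ↔ 2 * |c| < |up - um|) :=
  stmt_19_general σ um up c hσ hc0 du hdu ν hν G hG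
end
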